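/- For every solution x, F(x) ≤ 1; moreover F(x) = 1 if and only if every cell m ∈ {1, …, M−1} satisfies n_B^m + n_C^m ≥ 2r and n_A^m ≥ max(r, 2r − n_B^m), and additionally the last cell satisfies n_C^{M−1} ≥ r. -/

import Mathlib

open scoped ENNReal

namespace ENAS

/-- A cell: counts of A-, B-, C-type blocks, indexed by `Fin 3` (`0` = A, `1` = B, `2` = C). -/
abbrev Cell : Type := Fin 3 → ℕ

/-- A solution with `K + 1` cells (i.e. for the `Mcc` problem with `M = K + 2` classes). -/
abbrev Solution (K : ℕ) : Type := Fin (K + 1) → Cell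

/-- `I^m(x)`: the number of correctly formed triangle-shaped regions of a cell. -/
def Iterm (r : ℕ) (c : Cell) : ℕ := min (c 1 + c 2) (2 * r)

/-- `J^m(x)`: the number of correctly formed segment-shaped regions of a cell. -/
def Jterm (r : ℕ) (c : Cell) : ℕ := min (c 1) r + min (c 0) (r + (r - c 1))

/-- `ε(x)`: the number of misclassified segments of class `M`, computed in the integers
from the data of the last cell. -/
def eps (r : ℕ) (c : Cell) : ℤ := max 0 (min ((c 1 : ℤ) - (r : ℤ)) ((r : ℤ) - (c 2 : ℤ)))

/-- `𝕀(x)`. -/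
def Ival {K : ℕ} (r : ℕ) (x : Solution K) : ℕ := ∑ m, Iterm r (x m)

/-- `𝕁(x)`. -/
def Jval {K : ℕ} (r : ℕ) (x : Solution K) : ℕ := ∑ m, Jterm r (x m)

/-- The fitness `F(x)` of a solution for the `Mcc` problem with `M = K + 2` classes and
parameter `r`, where `n = 2 r M`, `Ar_tri = (1/2)·sin(2π/n)`, `Ar_seg = π/n − (1/2)·sin(2π/n)`,
and `F(x) = (Ar_tri·(𝕀(x) + 2r) + Ar_seg·(𝕁(x) + 2r − ε(x)))/π`. -/
noncomputable def fitness {K : ℕ} (r : ℕ) (x : Solution K) : ℝ :=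
  let n : ℕ := 2 * r * (K + 2)
  let ArTri : ℝ := (1 / 2) * Real.sin (2 * Real.pi / n)
  let ArSeg : ℝ := Real.pi / n - (1 / 2) * Real.sin (2 * Real.pi / n)
  (ArTri * ((Ival r x : ℝ) + 2 * r)
      + ArSeg * ((Jval r x : ℝ) + 2 * r - (eps r (x (Fin.last K)) : ℝ))) / Real.pi

/-- A pi-type of PMFs: sample each coordinate independently. -/
noncomputable def pmfPi {α : Type} : ∀ (n : ℕ), (Fin n → PMF α) → PMF (Fin n → α)
  | 0, _ => PMF.pure (fun i => i.elim0)
  | n + 1, p =>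
      (p 0).bind fun a => (pmfPi n (fun i => p i.succ)).bind fun f => PMF.pure (Fin.cons a f)

/-- One application of the mutation operation (Definition 1) to a cell: choose a block type `V`
uniformly at random, then uniformly at random perform Addition, Deletion, or Modification. -/
noncomputable def mutateCellOnce (c : Cell) : PMF Cell :=
  (PMF.uniformOfFintype (Fin 3)).bind fun V =>
    (PMF.uniformOfFintype (Fin 3)).bind fun op =>
      if op = 0 then
        -- Addition
        PMF.pure (Function.update c V (c V + 1))
      else if op = 1 then
        -- Deletion
        PMF.pure (if 0 < c V then Function.update c V (c V - 1) else c)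
      else
        -- Modification
        (PMF.uniformOfFinset (Finset.univ.erase V) (by
            rw [← Finset.card_pos, Finset.card_erase_of_mem (Finset.mem_univ _)]
            simp)).bind fun W =>
          PMF.pure
            (if 0 < c V then
              Function.update (Function.update c V (c V - 1)) W (c W + 1)
            else c)

/-- `k` consecutive applications of the mutation operation to a cell. -/
noncomputable def mutateCellTimes : ℕ → Cell → PMF Cell
  | 0, c => PMF.pure c
  | k + 1, c => (mutateCellOnce c).bind (mutateCellTimes k)

/-- Inner-level mutation on a selected cell: local (`inner = false`) applies the mutation
operation once; global (`inner = true`) applies it `K` consecutive times with `K ~ Pois(1)`. -/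
noncomputable def innerMutate (inner : Bool) (c : Cell) : PMF Cell :=
  if inner then (ProbabilityTheory.poissonPMF 1).bind fun k => mutateCellTimes k c
  else mutateCellOnce c

/-- One-bit outer-level mutation: select exactly one of the `K + 1` cells uniformly at random
and apply the inner-level mutation to it. -/
noncomputable def offspringOneBit {K : ℕ} (inner : Bool) (x : Solution K) : PMF (Solution K) :=
  (PMF.uniformOfFintype (Fin (K + 1))).bind fun m =>
    (innerMutate inner (x m)).bind fun c => PMF.pure (Function.update x m c)

/-- Bit-wise outer-level mutation: independently for each of the `K + 1` cells, with
probability `1/(K + 1)` apply the inner-level mutation to it, otherwise keep it. -/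
noncomputable def offspringBitWise {K : ℕ} (inner : Bool) (x : Solution K) : PMF (Solution K) :=
  pmfPi (K + 1) fun m =>
    (PMF.bernoulli ((K + 1 : ℕ) : NNReal)⁻¹
        (inv_le_one_of_one_le₀ (by exact_mod_cast Nat.one_le_iff_ne_zero.mpr (Nat.succ_ne_zero K)))).bind
      fun b => if b then innerMutate inner (x m) else PMF.pure (x m)

open scoped Classical in
/-- One generation of the (1+1)-ENAS algorithm: generate an offspring `y` from `x` by the
mutation operator `off` and accept it iff `F(y) ≥ F(x)` (ties prefer the offspring). -/
noncomputable def step {K : ℕ} (r : ℕ) (off : Solution K → PMF (Solution K)) (x : Solution K) :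
    PMF (Solution K) :=
  (off x).map fun y => if fitness r x ≤ fitness r y then y else x

/-- The initial solution: all `3 (K + 1)` block counts are drawn independently and uniformly
from `{1, …, s}`. -/
noncomputable def initPMF (K s : ℕ) (hs : 1 ≤ s) : PMF (Solution K) :=
  pmfPi (K + 1) fun _ =>
    pmfPi 3 fun _ => PMF.uniformOfFinset (Finset.Icc 1 s) (Finset.nonempty_Icc.mpr hs)

/-- The distribution of the solution `x_t` maintained by the (1+1)-ENAS algorithm after `t`
generations, starting from the initial distribution `init`. -/
noncomputable def solutionDist {K : ℕ} (r : ℕ) (off : Solution K → PMF (Solution K))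
    (init : PMF (Solution K)) : ℕ → PMF (Solution K)
  | 0 => init
  | t + 1 => (solutionDist r off init t).bind (step r off)

open scoped Classical in
/-- The expected runtime `E[T]` of the (1+1)-ENAS algorithm: since the set of optimal
solutions (those with `F(x) = 1`) is absorbing, `E[T] = ∑_{t ≥ 0} Pr[F(x_t) ≠ 1]`. -/
noncomputable def expectedRuntime {K : ℕ} (r : ℕ) (off : Solution K → PMF (Solution K))
    (init : PMF (Solution K)) : ℝ≥0∞ :=
  ∑' t : ℕ, ∑' x : Solution K, if fitness r x = 1 then 0 else solutionDist r off init t x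

end ENAS

/-!
Write `n = 2r(K + 2)` for the number of sides of the polygon, and `T`, `S` for the areas of the
triangle and of the circular segment that one side cuts out of the unit disc, so that
`n (T + S) = π`. Since `𝕀 ≤ (K + 1)·2r`, `𝕁 ≤ (K + 1)·2r` and `ε ≥ 0`, the fitness is
`1 - (T·d_I + S·d_J)/π` with nonnegative integer defects `d_I = (K + 1)·2r - 𝕀` and
`d_J = (K + 1)·2r - 𝕁 + ε`. As `T, S > 0`, `F ≤ 1` with equality iff both defects vanish,
which says that every cell attains the maxima of `I^m` and `J^m` and that `ε = 0`.
-/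

open Real Finset

theorem Fintype.sum_eq_card_mul_iff_of_le {ι : Type*} [Fintype ι] {f : ι → ℕ} {c : ℕ}
    (h : ∀ i, f i ≤ c) : ∑ i, f i = Fintype.card ι * c ↔ ∀ i, f i = c := by
  rw [← smul_eq_mul, ← Finset.card_univ, ← Finset.sum_const,
    Finset.sum_eq_sum_iff_of_le fun i _ => h i]
  simp

theorem mul_add_mul_eq_zero_iff {a b u v : ℝ} (ha : 0 < a) (hb : 0 < b) (hu : 0 ≤ u)
    (hv : 0 ≤ v) : a * u + b * v = 0 ↔ u = 0 ∧ v = 0 := by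
  rw [add_eq_zero_iff_of_nonneg (by positivity) (by positivity), mul_eq_zero, mul_eq_zero,
    or_iff_right ha.ne', or_iff_right hb.ne']

namespace ENAS

section Areas

noncomputable def triangleArea (n : ℕ) : ℝ := 1 / 2 * sin (2 * π / n)

noncomputable def segmentArea (n : ℕ) : ℝ := π / n - triangleArea n

variable {n : ℕ}

theorem triangleArea_pos (hn : 2 < n) : 0 < triangleArea n := by
  have hn' : (2 : ℝ) < n := by exact_mod_cast hn
  have hlt : 2 * π / n < π := by
    rw [div_lt_iff₀ (by linarith)]
    nlinarith [pi_pos]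
  unfold triangleArea
  have := sin_pos_of_pos_of_lt_pi (by positivity) hlt
  positivity

theorem segmentArea_pos (hn : n ≠ 0) : 0 < segmentArea n := by
  have hsin := sin_lt (show 0 < 2 * π / n by positivity)
  unfold segmentArea triangleArea
  linarith [show 2 * π / n = 2 * (π / n) by ring]

theorem triangleArea_add_segmentArea_mul (hn : n ≠ 0) :
    (triangleArea n + segmentArea n) * n = π := by
  unfold segmentArea
  field_simp
  ring

end Areas

section Terms

variable (r : ℕ) (c : Cell)

theorem Iterm_le : Iterm r c ≤ 2 * r := min_le_right _ _

theorem Iterm_eq_iff : Iterm r c = 2 * r ↔ 2 * r ≤ c 1 + c 2 := by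
  unfold Iterm; omega

theorem Jterm_le : Jterm r c ≤ 2 * r := by
  unfold Jterm; omega

theorem Jterm_eq_iff : Jterm r c = 2 * r ↔ max r (2 * r - c 1) ≤ c 0 := by
  unfold Jterm; omega

theorem eps_nonneg : 0 ≤ eps r c := le_max_left _ _

variable {r c} in
theorem eps_eq_zero_iff (h : 2 * r ≤ c 1 + c 2) :
    eps r c = 0 ↔ r ≤ c 2 := by
  unfold eps; omega

end Terms

section Defects

variable {K : ℕ} (r : ℕ) (x : Solution K)

def Idefect : ℤ := ((K + 1) * (2 * r) : ℕ) - (Ival r x : ℤ)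

def Jdefect : ℤ := ((K + 1) * (2 * r) : ℕ) - (Jval r x : ℤ) + eps r (x (Fin.last K))

theorem Ival_le : Ival r x ≤ (K + 1) * (2 * r) := by
  simpa [Ival] using Finset.sum_le_card_nsmul univ _ _ fun m _ => Iterm_le r (x m)

theorem Jval_le : Jval r x ≤ (K + 1) * (2 * r) := by
  simpa [Jval] using Finset.sum_le_card_nsmul univ _ _ fun m _ => Jterm_le r (x m)

theorem Ival_eq_iff : Ival r x = (K + 1) * (2 * r) ↔ ∀ m, Iterm r (x m) = 2 * r := by
  simpa [Ival] using Fintype.sum_eq_card_mul_iff_of_le fun m => Iterm_le r (x m)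

theorem Jval_eq_iff : Jval r x = (K + 1) * (2 * r) ↔ ∀ m, Jterm r (x m) = 2 * r := by
  simpa [Jval] using Fintype.sum_eq_card_mul_iff_of_le fun m => Jterm_le r (x m)

theorem Idefect_nonneg : 0 ≤ Idefect r x := by
  have := Ival_le r x
  unfold Idefect; omega

theorem Jdefect_nonneg : 0 ≤ Jdefect r x := by
  have := Jval_le r x
  have := eps_nonneg r (x (Fin.last K))
  unfold Jdefect; omega

theorem Idefect_eq_zero_and_Jdefect_eq_zero_iff :
    Idefect r x = 0 ∧ Jdefect r x = 0 ↔
      (∀ m, 2 * r ≤ x m 1 + x m 2 ∧ max r (2 * r - x m 1) ≤ x m 0) ∧ r ≤ x (Fin.last K) 2 := by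
  have hI : Idefect r x = 0 ↔ ∀ m, 2 * r ≤ x m 1 + x m 2 := by
    simp only [← Iterm_eq_iff, ← Ival_eq_iff, Idefect]
    omega
  have hJ : Jdefect r x = 0 ↔
      (∀ m, max r (2 * r - x m 1) ≤ x m 0) ∧ eps r (x (Fin.last K)) = 0 := by
    have := Jval_le r x
    have := eps_nonneg r (x (Fin.last K))
    simp only [← Jterm_eq_iff, ← Jval_eq_iff, Jdefect]
    omega
  rw [hI, hJ]
  constructor
  · rintro ⟨hcells, hcells', heps⟩
    exact ⟨fun m => ⟨hcells m, hcells' m⟩, (eps_eq_zero_iff (hcells _)).mp heps⟩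
  · rintro ⟨hcells, hlast⟩
    exact ⟨fun m => (hcells m).1, fun m => (hcells m).2,
      (eps_eq_zero_iff (hcells _).1).mpr hlast⟩

theorem fitness_eq_one_sub (hr : r ≠ 0) :
    fitness r x = 1 - (triangleArea (2 * r * (K + 2)) * Idefect r x
      + segmentArea (2 * r * (K + 2)) * Jdefect r x) / π := by
  have hn : 2 * r * (K + 2) ≠ 0 := by positivity
  have harea := triangleArea_add_segmentArea_mul hn
  change (triangleArea _ * _ + segmentArea _ * _) / π = _
  rw [eq_sub_iff_add_eq, ← add_div, div_eq_one_iff_eq pi_ne_zero, ← harea]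
  simp only [Idefect, Jdefect]
  push_cast
  ring

end Defects

end ENAS

open ENAS in
/-- For every solution `x` of the `Mcc` problem (with `M = K + 2 ≥ 2` classes and `r ≥ 2`),
`F(x) ≤ 1`, and `F(x) = 1` iff every cell `m` satisfies `n_B^m + n_C^m ≥ 2r` and
`n_A^m ≥ max(r, 2r − n_B^m)`, and additionally the last cell satisfies `n_C^{M−1} ≥ r`. -/
theorem fitness_le_one_and_optimum_characterization (K r : ℕ) (hr : 2 ≤ r) (x : Solution K) :
    fitness r x ≤ 1 ∧
      (fitness r x = 1 ↔
        ((∀ m : Fin (K + 1), 2 * r ≤ x m 1 + x m 2 ∧ max r (2 * r - x m 1) ≤ x m 0) ∧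
          r ≤ x (Fin.last K) 2)) := by
  have hT := triangleArea_pos (n := 2 * r * (K + 2)) (by nlinarith)
  have hS := segmentArea_pos (n := 2 * r * (K + 2)) (by positivity)
  have hI : (0 : ℝ) ≤ Idefect r x := by exact_mod_cast Idefect_nonneg r x
  have hJ : (0 : ℝ) ≤ Jdefect r x := by exact_mod_cast Jdefect_nonneg r x
  rw [fitness_eq_one_sub r x (by omega), ← Idefect_eq_zero_and_Jdefect_eq_zero_iff]
  refine ⟨sub_le_self _ (by positivity), ?_⟩
  rw [sub_eq_self, div_eq_zero_iff, or_iff_left pi_ne_zero, mul_add_mul_eq_zero_iff hT hS hI hJ,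
    Int.cast_eq_zero, Int.cast_eq_zero]
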